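/- arXiv:2208.14569 — 6 statements merged into one kernel-verified Lean document; each statement's English description precedes it below -/
import Mathlib

section
/- Let s ≥ r > 1 be integers, let n ≥ 1, and let A be a subset of ℤ/sℤ with |A| = r. Let C ⊆ (ℤ/sℤ)^n be a code with |C| = M such that any two distinct codewords of C have Hamming distance at least d. Then there exists a set C′ ⊆ A^n ⊆ (ℤ/sℤ)^n such that any two distinct elements of C′ have Hamming distance at least d and s^n · |C′| ≥ r^n · M (i.e., |C′| ≥ M·(r/s)^n). -/
/-- Alphabet restriction (Lemma 2.4(2)): from an `(n, M, d)`-code over `ℤ/sℤ` and a subset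
`A ⊆ ℤ/sℤ` of size `r`, one obtains a code with entries in `A`, the same minimum distance,
and at least `M·(r/s)^n` codewords. -/
theorem stmt_5 (s r n d M : ℕ) (hr : 1 < r) (hrs : r ≤ s) (hn : 1 ≤ n)
    (A : Finset (ZMod s)) (hA : A.card = r)
    (C : Finset (Fin n → ZMod s)) (hM : C.card = M)
    (hC : ∀ x ∈ C, ∀ y ∈ C, x ≠ y → d ≤ hammingDist x y) :
    ∃ C' : Finset (Fin n → ZMod s),
      (∀ x ∈ C', ∀ i, x i ∈ A) ∧
      (∀ x ∈ C', ∀ y ∈ C', x ≠ y → d ≤ hammingDist x y) ∧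
      r ^ n * M ≤ s ^ n * C'.card := by
  haveI : NeZero s := ⟨by omega⟩
  -- f v = number of codewords c with c + v ∈ A^n
  set f : (Fin n → ZMod s) → ℕ :=
    fun v => (C.filter (fun c => ∀ i, c i + v i ∈ A)).card with hf
  -- double counting
  have hsum : ∑ v : Fin n → ZMod s, f v = M * r ^ n := by
    have : ∀ v, f v = ∑ c ∈ C, if (∀ i, c i + v i ∈ A) then 1 else 0 := by
      intro v; rw [hf]; exact Finset.card_filter _ _
    simp_rw [this]
    rw [Finset.sum_comm]
    have hc : ∀ c ∈ C,
        (∑ v : Fin n → ZMod s, if (∀ i, c i + v i ∈ A) then 1 else 0) = r ^ n := by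
      intro c _
      have heq : (Finset.univ.filter (fun v : Fin n → ZMod s => ∀ i, c i + v i ∈ A))
          = Fintype.piFinset (fun i => A.image (fun a => a - c i)) := by
        ext v
        simp only [Finset.mem_filter, Finset.mem_univ, true_and, Fintype.mem_piFinset,
          Finset.mem_image]
        constructor
        · intro h i; exact ⟨c i + v i, h i, by ring⟩
        · intro h i; obtain ⟨a, ha, hav⟩ := h i
          have : c i + v i = a := by rw [← hav]; ring
          rwa [this]
      rw [← Finset.card_filter, heq, Fintype.card_piFinset]
      have : ∀ i : Fin n, (A.image (fun a => a - c i)).card = r := by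
        intro i
        rw [Finset.card_image_of_injective _ (sub_left_injective), hA]
      simp [this]
    rw [Finset.sum_congr rfl hc, Finset.sum_const, hM, smul_eq_mul]
  -- pigeonhole: some v has s^n * f v ≥ r^n * M
  have hcard : (Finset.univ : Finset (Fin n → ZMod s)).card = s ^ n := by
    simp [ZMod.card]
  obtain ⟨v, _, hv⟩ : ∃ v ∈ (Finset.univ : Finset (Fin n → ZMod s)),
      r ^ n * M ≤ s ^ n * f v := by
    apply Finset.exists_le_of_sum_le ⟨fun _ => 0, Finset.mem_univ _⟩
    rw [Finset.sum_const, ← Finset.mul_sum, hsum, hcard, smul_eq_mul]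
    ring_nf
    exact le_refl _
  -- construct C'
  refine ⟨(C.filter (fun c => ∀ i, c i + v i ∈ A)).image (fun c => c + v), ?_, ?_, ?_⟩
  · intro x hx i
    obtain ⟨c, hc, rfl⟩ := Finset.mem_image.mp hx
    exact (Finset.mem_filter.mp hc).2 i
  · intro x hx y hy hxy
    obtain ⟨c, hc, rfl⟩ := Finset.mem_image.mp hx
    obtain ⟨c', hc', rfl⟩ := Finset.mem_image.mp hy
    have hcc' : c ≠ c' := by rintro rfl; exact hxy rfl
    have hd := hC c (Finset.mem_filter.mp hc).1 c' (Finset.mem_filter.mp hc').1 hcc'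
    have : hammingDist (c + v) (c' + v) = hammingDist c c' := by
      have := hammingDist_comp (fun i => (· + v i : ZMod s → ZMod s))
        (x := c) (y := c') (fun i => add_left_injective (v i))
      simpa [Pi.add_def] using this
    omega
  · rw [Finset.card_image_of_injective _ (add_left_injective v)]
    exact hv
end

section
/- Let r, s ≥ 2 be integers and n ≥ 1. Let ι_r : ℤ/rℤ → ℤ/(rs)ℤ and ι_s : ℤ/sℤ → ℤ/(rs)ℤ be the maps sending a residue class to the class of its canonical representative in {0,…,r−1} (respectively {0,…,s−1}). Let C₁ ⊆ (ℤ/rℤ)^n be a code of size M₁ with pairwise Hamming distances at least d₁, and let C₂ ⊆ (ℤ/sℤ)^n be a code of size M₂ with pairwise Hamming distances at least d₂. Define C = { (ι_r(u_1) + r·ι_s(v_1), …, ι_r(u_n) + r·ι_s(v_n)) : u ∈ C₁, v ∈ C₂ } ⊆ (ℤ/(rs)ℤ)^n. Then |C| = M₁·M₂ and any two distinct elements of C have Hamming distance at least min{d₁, d₂}. -/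
lemma aux_val (r s : ℕ) (hr : 2 ≤ r) (hs : 2 ≤ s) (a : ZMod r) (b : ZMod s) :
    (((a.val : ZMod (r * s)) + (r : ZMod (r * s)) * (b.val : ZMod (r * s)))).val
      = a.val + r * b.val := by
  haveI : NeZero r := ⟨by omega⟩
  haveI : NeZero s := ⟨by omega⟩
  haveI : NeZero (r * s) := ⟨by positivity⟩
  have ha := ZMod.val_lt a
  have hb := ZMod.val_lt b
  have hlt : a.val + r * b.val < r * s := by nlinarith
  have : ((a.val : ZMod (r * s)) + (r : ZMod (r * s)) * (b.val : ZMod (r * s)))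
      = ((a.val + r * b.val : ℕ) : ZMod (r * s)) := by push_cast; ring
  rw [this, ZMod.val_cast_of_lt hlt]

lemma aux_inj (r s : ℕ) (hr : 2 ≤ r) (hs : 2 ≤ s) (a a' : ZMod r) (b b' : ZMod s)
    (h : ((a.val : ZMod (r * s)) + (r : ZMod (r * s)) * (b.val : ZMod (r * s)))
       = ((a'.val : ZMod (r * s)) + (r : ZMod (r * s)) * (b'.val : ZMod (r * s)))) :
    a = a' ∧ b = b' := by
  haveI : NeZero r := ⟨by omega⟩
  haveI : NeZero s := ⟨by omega⟩
  have e : a.val + r * b.val = a'.val + r * b'.val := by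
    have := congrArg ZMod.val h
    rwa [aux_val r s hr hs, aux_val r s hr hs] at this
  have ha := ZMod.val_lt a
  have ha' := ZMod.val_lt a'
  have e1 : a.val = a'.val := by
    have h1 : (a.val + r * b.val) % r = a.val % r := by
      simp [Nat.add_mul_mod_self_left]
    have h2 : (a'.val + r * b'.val) % r = a'.val % r := by
      simp [Nat.add_mul_mod_self_left]
    rw [e, h2, Nat.mod_eq_of_lt ha'] at h1
    rw [Nat.mod_eq_of_lt ha] at h1
    omega
  have e2 : b.val = b'.val := by
    have : r * b.val = r * b'.val := by omega
    exact Nat.eq_of_mul_eq_mul_left (by omega) this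
  exact ⟨ZMod.val_injective r e1, ZMod.val_injective s e2⟩

/-- Alphabet multiplication (Lemma 2.4(3)): from an `(n, M₁, d₁)`-code over `ℤ/rℤ` and an
`(n, M₂, d₂)`-code over `ℤ/sℤ`, the code `C₁ + r·C₂ ⊆ (ℤ/rsℤ)^n` (formed coordinatewise via
canonical representatives) is an `(n, M₁M₂, min{d₁,d₂})`-code. -/
theorem stmt_6 (r s n d₁ d₂ M₁ M₂ : ℕ) (hr : 2 ≤ r) (hs : 2 ≤ s) (hn : 1 ≤ n)
    (C₁ : Finset (Fin n → ZMod r)) (hM₁ : C₁.card = M₁)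
    (hC₁ : ∀ x ∈ C₁, ∀ y ∈ C₁, x ≠ y → d₁ ≤ hammingDist x y)
    (C₂ : Finset (Fin n → ZMod s)) (hM₂ : C₂.card = M₂)
    (hC₂ : ∀ x ∈ C₂, ∀ y ∈ C₂, x ≠ y → d₂ ≤ hammingDist x y) :
    ∀ C : Finset (Fin n → ZMod (r * s)),
      C = (C₁ ×ˢ C₂).image
        (fun p => fun i : Fin n =>
          (((p.1 i).val : ZMod (r * s)) + (r : ZMod (r * s)) * ((p.2 i).val : ZMod (r * s)))) →
      C.card = M₁ * M₂ ∧
        (∀ x ∈ C, ∀ y ∈ C, x ≠ y → min d₁ d₂ ≤ hammingDist x y) := by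
  intro C hCeq
  subst hCeq
  set f : (Fin n → ZMod r) × (Fin n → ZMod s) → (Fin n → ZMod (r * s)) :=
    fun p => fun i : Fin n =>
      (((p.1 i).val : ZMod (r * s)) + (r : ZMod (r * s)) * ((p.2 i).val : ZMod (r * s)))
    with hf
  have hinj : Function.Injective f := by
    intro p q hpq
    have : ∀ i, p.1 i = q.1 i ∧ p.2 i = q.2 i := by
      intro i
      exact aux_inj r s hr hs _ _ _ _ (congrFun hpq i)
    exact Prod.ext (funext fun i => (this i).1) (funext fun i => (this i).2)
  constructor
  · rw [Finset.card_image_of_injective _ hinj, Finset.card_product, hM₁, hM₂]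
  · intro x hx y hy hxy
    obtain ⟨⟨u, v⟩, huv, rfl⟩ := Finset.mem_image.mp hx
    obtain ⟨⟨u', v'⟩, huv', rfl⟩ := Finset.mem_image.mp hy
    obtain ⟨hu, hv⟩ := Finset.mem_product.mp huv
    obtain ⟨hu', hv'⟩ := Finset.mem_product.mp huv'
    have hcoord : ∀ i, f (u, v) i = f (u', v') i → u i = u' i ∧ v i = v' i := by
      intro i h
      exact aux_inj r s hr hs _ _ _ _ h
    have hne : u ≠ u' ∨ v ≠ v' := by
      by_contra h
      push_neg at h
      exact hxy (by rw [h.1, h.2])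
    rcases hne with h | h
    · calc min d₁ d₂ ≤ d₁ := min_le_left _ _
        _ ≤ hammingDist u u' := hC₁ u hu u' hu' h
        _ ≤ hammingDist (f (u, v)) (f (u', v')) := by
            unfold hammingDist
            apply Finset.card_le_card
            intro i hi
            simp only [Finset.mem_filter, Finset.mem_univ, true_and] at hi ⊢
            exact fun hc => hi ((hcoord i hc).1)
    · calc min d₁ d₂ ≤ d₂ := min_le_right _ _
        _ ≤ hammingDist v v' := hC₂ v hv v' hv' h
        _ ≤ hammingDist (f (u, v)) (f (u', v')) := by
            unfold hammingDist
            apply Finset.card_le_card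
            intro i hi
            simp only [Finset.mem_filter, Finset.mem_univ, true_and] at hi ⊢
            exact fun hc => hi ((hcoord i hc).2)
end

section
/- Let q ≥ 2 be an integer, and let n, d be positive integers with n ≥ q + 1 and d · ln(1 + 2/q) ≥ n · ln(1 + 1/q). Then, as real numbers, 1 + q^{n−d−2} · (1 + (q−1)·n) > (q+1)^n / (q+2)^d, where q^{n−d−2} denotes the integer power of q with (possibly negative) integer exponent n − d − 2. -/
/-- Numerical inequality underlying Proposition 4.3: if `n ≥ q+1` and
`d·ln(1+2/q) ≥ n·ln(1+1/q)`, then `1 + q^{n-d-2}(1+(q-1)n) > (q+1)^n/(q+2)^d`. -/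
theorem stmt_7 (q : ℤ) (hq : 2 ≤ q) (n d : ℕ) (hn0 : 1 ≤ n) (hd0 : 1 ≤ d)
    (hn : q + 1 ≤ (n : ℤ))
    (hd : (n : ℝ) * Real.log (1 + 1 / (q : ℝ)) ≤ (d : ℝ) * Real.log (1 + 2 / (q : ℝ))) :
    ((q : ℝ) + 1) ^ n / ((q : ℝ) + 2) ^ d <
      1 + (q : ℝ) ^ ((n : ℤ) - (d : ℤ) - 2) * (1 + ((q : ℝ) - 1) * (n : ℝ)) := by
  set Q : ℝ := (q : ℝ) with hQdef
  have hQ2 : (2:ℝ) ≤ Q := by rw [hQdef]; exact_mod_cast hq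
  have hQ0 : (0:ℝ) < Q := by linarith
  have hn' : Q + 1 ≤ (n : ℝ) := by rw [hQdef]; exact_mod_cast hn
  have hpow : (1 + 1/Q) ^ n ≤ (1 + 2/Q) ^ d := by
    rw [← Real.log_le_log_iff (by positivity) (by positivity)]
    rwa [Real.log_pow, Real.log_pow]
  have e1 : 1 + 1/Q = (Q+1)/Q := by field_simp
  have e2 : 1 + 2/Q = (Q+2)/Q := by field_simp
  rw [e1, e2, div_pow, div_pow] at hpow
  rw [div_le_div_iff₀ (by positivity) (by positivity)] at hpow
  -- hpow : (Q+1)^n * Q^d ≤ (Q+2)^d * Q^n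
  have key : (Q+1)^n / (Q+2)^d ≤ Q ^ ((n:ℤ) - (d:ℤ)) := by
    rw [zpow_sub₀ (ne_of_gt hQ0), zpow_natCast, zpow_natCast,
      div_le_div_iff₀ (by positivity) (by positivity)]
    linarith
  have hq2 : Q^2 ≤ 1 + (Q-1) * (n:ℝ) := by nlinarith
  have hz : Q ^ ((n:ℤ) - (d:ℤ)) = Q ^ ((n:ℤ) - (d:ℤ) - 2) * Q^2 := by
    rw [← zpow_natCast Q 2, ← zpow_add₀ (ne_of_gt hQ0)]
    norm_num
  have hmul : Q ^ ((n:ℤ) - (d:ℤ)) ≤ Q ^ ((n:ℤ) - (d:ℤ) - 2) * (1 + (Q-1) * (n:ℝ)) := by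
    rw [hz]
    exact mul_le_mul_of_nonneg_left hq2 (zpow_pos hQ0 _).le
  linarith
end

section
/- Let q ≥ 2 and a ≥ 1 be integers, and let n, d be positive integers with n ≥ q + 1 and d · ln(1 + a/q) ≥ n · ln(1 + 1/q) + ln(q + a). Then, as real numbers, q^{n−d−2} · (1 + (q−1)·n) ≥ (q+1)^n / (q+a)^{d−1}, and consequently 1 + q^{n−d−2} · (1 + (q−1)·n) > (q+1)^n / (q+a)^{d−1}, where q^{n−d−2} denotes the integer power of q with (possibly negative) integer exponent n − d − 2. -/
/-- Inequality from the Remark after Proposition 4.3: if `n ≥ q+1` and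
`d·ln(1+a/q) ≥ n·ln(1+1/q) + ln(q+a)`, then
`q^{n-d-2}(1+(q-1)n) ≥ (q+1)^n/(q+a)^{d-1}`, and consequently
`1 + q^{n-d-2}(1+(q-1)n) > (q+1)^n/(q+a)^{d-1}`. -/
theorem stmt_8 (q a : ℤ) (hq : 2 ≤ q) (ha : 1 ≤ a) (n d : ℕ) (hn0 : 1 ≤ n) (hd0 : 1 ≤ d)
    (hn : q + 1 ≤ (n : ℤ))
    (hd : (n : ℝ) * Real.log (1 + 1 / (q : ℝ)) + Real.log ((q : ℝ) + (a : ℝ)) ≤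
      (d : ℝ) * Real.log (1 + (a : ℝ) / (q : ℝ))) :
    ((q : ℝ) + 1) ^ n / ((q : ℝ) + (a : ℝ)) ^ ((d : ℤ) - 1) ≤
        (q : ℝ) ^ ((n : ℤ) - (d : ℤ) - 2) * (1 + ((q : ℝ) - 1) * (n : ℝ)) ∧
      ((q : ℝ) + 1) ^ n / ((q : ℝ) + (a : ℝ)) ^ ((d : ℤ) - 1) <
        1 + (q : ℝ) ^ ((n : ℤ) - (d : ℤ) - 2) * (1 + ((q : ℝ) - 1) * (n : ℝ)) := by
  set Q : ℝ := (q : ℝ) with hQdef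
  set A : ℝ := (a : ℝ) with hAdef
  have hQ : (2 : ℝ) ≤ Q := by rw [hQdef]; exact_mod_cast hq
  have hA : (1 : ℝ) ≤ A := by rw [hAdef]; exact_mod_cast ha
  have hQ0 : (0 : ℝ) < Q := by linarith
  have hQA : (0 : ℝ) < Q + A := by linarith
  have hN : Q + 1 ≤ (n : ℝ) := by rw [hQdef]; exact_mod_cast hn
  have h1 : (0 : ℝ) < 1 + 1 / Q := by positivity
  have h2 : (0 : ℝ) < 1 + A / Q := by positivity
  -- exponentiate hypothesis
  have hlog : Real.log ((1 + 1 / Q) ^ n * (Q + A)) ≤ Real.log ((1 + A / Q) ^ d) := by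
    rw [Real.log_mul (pow_ne_zero _ h1.ne') hQA.ne', Real.log_pow, Real.log_pow]
    push_cast
    exact hd
  have key : (1 + 1 / Q) ^ n * (Q + A) ≤ (1 + A / Q) ^ d :=
    (Real.log_le_log_iff (by positivity) (by positivity)).mp hlog
  have e1 : (1 : ℝ) + 1 / Q = (Q + 1) / Q := by field_simp
  have e2 : (1 : ℝ) + A / Q = (Q + A) / Q := by field_simp
  rw [e1, e2, div_pow, div_pow] at key
  -- key : (Q+1)^n / Q^n * (Q+A) ≤ (Q+A)^d / Q^d
  have star : (Q + 1) ^ n * (Q + A) * Q ^ d ≤ Q ^ n * (Q + A) ^ d := by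
    have hqn : (0 : ℝ) < Q ^ n := by positivity
    have hqd : (0 : ℝ) < Q ^ d := by positivity
    have := mul_le_mul_of_nonneg_right key (le_of_lt (mul_pos hqn hqd))
    calc (Q + 1) ^ n * (Q + A) * Q ^ d
        = (Q + 1) ^ n / Q ^ n * (Q + A) * (Q ^ n * Q ^ d) := by
          field_simp
      _ ≤ (Q + A) ^ d / Q ^ d * (Q ^ n * Q ^ d) := this
      _ = Q ^ n * (Q + A) ^ d := by field_simp
  set X : ℝ := Q ^ ((n : ℤ) - (d : ℤ) - 2) with hXdef
  set P : ℝ := (Q + A) ^ ((d : ℤ) - 1) with hPdef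
  have hX0 : 0 < X := zpow_pos hQ0 _
  have hP0 : 0 < P := zpow_pos hQA _
  have hXeq : X * (Q ^ d * Q ^ 2) = Q ^ n := by
    calc X * (Q ^ d * Q ^ 2)
        = Q ^ ((n : ℤ) - (d : ℤ) - 2) * (Q ^ ((d : ℕ) : ℤ) * Q ^ ((2 : ℕ) : ℤ)) := by
          rw [hXdef, zpow_natCast, zpow_natCast]
      _ = Q ^ ((n : ℤ) - (d : ℤ) - 2 + (((d : ℕ) : ℤ) + ((2 : ℕ) : ℤ))) := by
          rw [← zpow_add₀ hQ0.ne', ← zpow_add₀ hQ0.ne']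
      _ = Q ^ ((n : ℕ) : ℤ) := by
          congr 1
          push_cast
          ring
      _ = Q ^ n := zpow_natCast Q n
  have hPeq : P * (Q + A) = (Q + A) ^ d := by
    calc P * (Q + A)
        = (Q + A) ^ ((d : ℤ) - 1) * (Q + A) ^ (1 : ℤ) := by rw [hPdef, zpow_one]
      _ = (Q + A) ^ ((d : ℤ) - 1 + 1) := (zpow_add₀ hQA.ne' _ _).symm
      _ = (Q + A) ^ ((d : ℕ) : ℤ) := by congr 1; ring
      _ = (Q + A) ^ d := zpow_natCast _ d
  have hR : Q ^ 2 ≤ 1 + (Q - 1) * (n : ℝ) := by nlinarith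
  have main : (Q + 1) ^ n / P ≤ X * (1 + (Q - 1) * (n : ℝ)) := by
    rw [div_le_iff₀ hP0]
    have hpos : (0 : ℝ) < (Q + A) * (Q ^ d * Q ^ 2) := by positivity
    have h3 : (Q + 1) ^ n * ((Q + A) * (Q ^ d * Q ^ 2)) ≤
        X * (1 + (Q - 1) * (n : ℝ)) * P * ((Q + A) * (Q ^ d * Q ^ 2)) := by
      have h4 : X * (1 + (Q - 1) * (n : ℝ)) * P * ((Q + A) * (Q ^ d * Q ^ 2)) =
          (1 + (Q - 1) * (n : ℝ)) * (X * (Q ^ d * Q ^ 2)) * (P * (Q + A)) := by ring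
      rw [h4, hXeq, hPeq]
      have hQ2 : (0 : ℝ) < Q ^ 2 := by positivity
      calc (Q + 1) ^ n * ((Q + A) * (Q ^ d * Q ^ 2))
          = ((Q + 1) ^ n * (Q + A) * Q ^ d) * Q ^ 2 := by ring
        _ ≤ (Q ^ n * (Q + A) ^ d) * Q ^ 2 := by
            exact mul_le_mul_of_nonneg_right star hQ2.le
        _ ≤ (Q ^ n * (Q + A) ^ d) * (1 + (Q - 1) * (n : ℝ)) := by
            have : (0 : ℝ) < Q ^ n * (Q + A) ^ d := by positivity
            exact mul_le_mul_of_nonneg_left hR this.le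
        _ = (1 + (Q - 1) * (n : ℝ)) * (Q ^ n) * ((Q + A) ^ d) := by ring
    exact le_of_mul_le_mul_right h3 hpos
  exact ⟨main, by linarith⟩
end

section
/- Let q ≥ 2 be an integer, g ≥ 0 an integer, and let n, d be integers with n ≥ q + 1 and (d + g − 1) · ln(1 + 2/q) ≥ n · ln(1 + 1/q). Then, as real numbers, 1 + q^{n−g−d−1} · (1 + (q−1)·n) > (q+1)^n / (q+2)^{d+g−1}, where the powers are integer powers with possibly negative integer exponents. -/
/-- Numerical inequality underlying Proposition 5.2: for integers `q ≥ 2`, `g ≥ 0`,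
`n ≥ q+1` and `d` with `(d+g-1)·ln(1+2/q) ≥ n·ln(1+1/q)`, one has
`1 + q^{n-g-d-1}(1+(q-1)n) > (q+1)^n/(q+2)^{d+g-1}`. -/
theorem stmt_10 (q g n d : ℤ) (hq : 2 ≤ q) (hg : 0 ≤ g) (hn : q + 1 ≤ n)
    (hd : (n : ℝ) * Real.log (1 + 1 / (q : ℝ)) ≤
      ((d : ℝ) + (g : ℝ) - 1) * Real.log (1 + 2 / (q : ℝ))) :
    ((q : ℝ) + 1) ^ n / ((q : ℝ) + 2) ^ (d + g - 1) <
      1 + (q : ℝ) ^ (n - g - d - 1) * (1 + ((q : ℝ) - 1) * (n : ℝ)) := by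
  have hq0 : (0 : ℝ) < (q : ℝ) := by exact_mod_cast (by linarith : (0:ℤ) < q)
  have hq2 : (2 : ℝ) ≤ (q : ℝ) := by exact_mod_cast hq
  have hn' : (q : ℝ) + 1 ≤ (n : ℝ) := by exact_mod_cast hn
  have hq1 : (0 : ℝ) < (q : ℝ) + 1 := by linarith
  have hq2' : (0 : ℝ) < (q : ℝ) + 2 := by linarith
  have hA : (0 : ℝ) < ((q : ℝ) + 1) ^ n / ((q : ℝ) + 2) ^ (d + g - 1) :=
    div_pos (zpow_pos hq1 _) (zpow_pos hq2' _)
  have hB : (0 : ℝ) < (q : ℝ) ^ (n - d - g + 1) := zpow_pos hq0 _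
  -- rewrite hd using log_div
  have h1 : (1 : ℝ) + 1 / (q : ℝ) = ((q : ℝ) + 1) / q := by field_simp
  have h2 : (1 : ℝ) + 2 / (q : ℝ) = ((q : ℝ) + 2) / q := by field_simp
  rw [h1, h2, Real.log_div (by linarith) (ne_of_gt hq0),
    Real.log_div (by linarith) (ne_of_gt hq0)] at hd
  have key : ((q : ℝ) + 1) ^ n / ((q : ℝ) + 2) ^ (d + g - 1) ≤
      (q : ℝ) ^ (n - d - g + 1) := by
    rw [← Real.log_le_log_iff hA hB, Real.log_div (ne_of_gt (zpow_pos hq1 _))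
      (ne_of_gt (zpow_pos hq2' _)), Real.log_zpow, Real.log_zpow, Real.log_zpow]
    push_cast
    linarith
  have hsplit : (q : ℝ) ^ (n - d - g + 1) =
      (q : ℝ) ^ (n - g - d - 1) * (q : ℝ) ^ 2 := by
    rw [← zpow_natCast _ 2, ← zpow_add₀ (ne_of_gt hq0)]
    ring_nf
  have hm : (0 : ℝ) < (q : ℝ) ^ (n - g - d - 1) := zpow_pos hq0 _
  have hsq : ((q : ℝ)) ^ 2 ≤ 1 + ((q : ℝ) - 1) * (n : ℝ) := by nlinarith
  calc ((q : ℝ) + 1) ^ n / ((q : ℝ) + 2) ^ (d + g - 1)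
      ≤ (q : ℝ) ^ (n - g - d - 1) * (q : ℝ) ^ 2 := by rw [← hsplit]; exact key
    _ ≤ (q : ℝ) ^ (n - g - d - 1) * (1 + ((q : ℝ) - 1) * (n : ℝ)) := by
        exact mul_le_mul_of_nonneg_left hsq (le_of_lt hm)
    _ < 1 + (q : ℝ) ^ (n - g - d - 1) * (1 + ((q : ℝ) - 1) * (n : ℝ)) := by linarith
end

section
/- Let q ≥ 2 be a prime power and let s be an integer with 1 ≤ s ≤ q/2. Then q^{2s+1} + q^{2s} − 2q^{s} + 2 > (q+1)^{2s}. -/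
lemma aux_real_bound (q s : ℕ) (hq : 2 ≤ q) (hs2 : 2 * s ≤ q) :
    ((q : ℝ) + 1) ^ (2 * s) < 3 * (q : ℝ) ^ (2 * s) := by
  have hq0 : (0:ℝ) < q := by positivity
  have h1 : (q : ℝ) + 1 ≤ (q : ℝ) * Real.exp ((q : ℝ)⁻¹) := by
    have := Real.add_one_le_exp ((q : ℝ)⁻¹)
    calc (q : ℝ) + 1 = (q : ℝ) * ((q : ℝ)⁻¹ + 1) := by field_simp; ring
    _ ≤ (q : ℝ) * Real.exp ((q : ℝ)⁻¹) := by
        apply mul_le_mul_of_nonneg_left this hq0.le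
  have h2 : ((q : ℝ) + 1) ^ (2 * s) ≤ ((q : ℝ) * Real.exp ((q : ℝ)⁻¹)) ^ (2 * s) := by
    apply pow_le_pow_left₀ (by positivity) h1
  have h3 : ((q : ℝ) * Real.exp ((q : ℝ)⁻¹)) ^ (2 * s)
      = (q : ℝ) ^ (2 * s) * Real.exp ((2 * s : ℕ) * (q : ℝ)⁻¹) := by
    rw [mul_pow, Real.exp_nat_mul]
  have h4 : Real.exp ((2 * s : ℕ) * (q : ℝ)⁻¹) ≤ Real.exp 1 := by
    apply Real.exp_le_exp.mpr
    rw [← div_eq_mul_inv, div_le_one hq0]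
    exact_mod_cast hs2
  have h5 : Real.exp 1 < 3 := Real.exp_one_lt_d9.trans (by norm_num)
  calc ((q : ℝ) + 1) ^ (2 * s) ≤ (q : ℝ) ^ (2 * s) * Real.exp ((2 * s : ℕ) * (q : ℝ)⁻¹) := by
        rw [← h3]; exact h2
  _ ≤ (q : ℝ) ^ (2 * s) * Real.exp 1 := by
      apply mul_le_mul_of_nonneg_left h4 (by positivity)
  _ < (q : ℝ) ^ (2 * s) * 3 := by
      apply mul_lt_mul_of_pos_left h5 (by positivity)
  _ = 3 * (q : ℝ) ^ (2 * s) := by ring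

lemma aux_int_bound (q s : ℕ) (hq : 2 ≤ q) (hs2 : 2 * s ≤ q) :
    ((q : ℤ) + 1) ^ (2 * s) < 3 * (q : ℤ) ^ (2 * s) := by
  have := aux_real_bound q s hq hs2
  exact_mod_cast this

/-- Inequality from [JMX21] recalled in Section 5: for a prime power `q` and
`1 ≤ s ≤ q/2`, one has `q^{2s+1} + q^{2s} - 2q^s + 2 > (q+1)^{2s}`. -/
theorem stmt_13 (q s : ℕ) (hq : IsPrimePow q) (hq2 : 2 ≤ q)
    (hs1 : 1 ≤ s) (hs2 : 2 * s ≤ q) :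
    ((q : ℤ) + 1) ^ (2 * s) <
      (q : ℤ) ^ (2 * s + 1) + (q : ℤ) ^ (2 * s) - 2 * (q : ℤ) ^ s + 2 := by
  rcases eq_or_lt_of_le hq2 with h2 | h3
  · -- q = 2, so s = 1
    have hs : s = 1 := by omega
    subst hs
    rw [← h2]
    norm_num
  · have hq3 : 3 ≤ q := h3
    have hb := aux_int_bound q s hq2 hs2
    have hqz : (3 : ℤ) ≤ (q : ℤ) := by exact_mod_cast hq3
    have h1 : (3 : ℤ) * (q : ℤ) ^ (2 * s) ≤ (q : ℤ) ^ (2 * s + 1) := by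
      rw [pow_succ]
      have : (0:ℤ) ≤ (q : ℤ) ^ (2 * s) := by positivity
      nlinarith
    have h2' : 2 * (q : ℤ) ^ s ≤ (q : ℤ) ^ (2 * s) := by
      have : (q : ℤ) ^ (2 * s) = (q : ℤ) ^ s * (q : ℤ) ^ s := by
        rw [← pow_add]; ring_nf
      rw [this]
      have hqs : (2:ℤ) ≤ (q : ℤ) ^ s := by
        calc (2:ℤ) ≤ (q:ℤ) := by exact_mod_cast hq2
        _ ≤ (q:ℤ)^s := le_self_pow₀ (by linarith) (by omega)
      nlinarith
    linarith
end
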